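/- arXiv:0905.4181 — 3 statements merged into one kernel-verified Lean document; each statement's English description precedes it below -/
import Mathlib

section
/- Let G be a finite group, g, h ∈ G, and suppose the cyclic subgroup ⟨h⟩ generated by h is disjoint from the conjugacy class [g] of g. Then there exists a virtual character x (a ℤ-linear combination of irreducible complex characters of G) such that x(g) ≠ 0 and x(h^m) = 0 for all integers m. -/
/-!
Let `θ` be the permutation character of `G` acting on the cosets of `H = ⟨h⟩`, so `θ t` counts
the cosets fixed by `t`. Since `t` fixes `aH` exactly when `a⁻¹ t a ∈ H`, the hypothesis makes
`θ g = 0`, while `θ` is a positive integer on `H` (every element of `H` fixes `H`). Characters are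
virtual characters by Maschke's theorem, and virtual characters form a ring because characters
multiply under tensor products; hence `∏_{t ∈ H} (θ - θ t)` is a virtual character. It vanishes
on `H` and takes the value `∏_{t ∈ H} (-θ t) ≠ 0` at `g`.
-/

open CategoryTheory

universe u

theorem FDRep.simple_of_isIrreducible {k G V : Type u} [Field k] [Monoid G]
    [AddCommGroup V] [Module k V] [FiniteDimensional k V]
    (ρ : Representation k G V) [ρ.IsIrreducible] : Simple (FDRep.of ρ) := by
  let F := forget₂ (FDRep k G) (Rep k G) ⋙ Rep.toModuleMonoidAlgebra
  have : Simple (F.obj (FDRep.of ρ)) := (simple_iff_isSimpleModule' _).2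
    ((Representation.irreducible_iff_isSimpleModule_asModule ρ).1 ‹_›)
  exact F.simple_of_simple_obj _

namespace Subrepresentation

variable {k G V : Type*} [Field k] [Monoid G] [AddCommGroup V] [Module k V]
  {ρ : Representation k G V}

theorem isCompl_toSubmodule {p q : Subrepresentation ρ} (h : IsCompl p q) :
    IsCompl p.toSubmodule q.toSubmodule := by
  constructor
  · rw [disjoint_iff, ← toSubmodule_inf, h.inf_eq_bot]
    rfl
  · rw [codisjoint_iff, ← toSubmodule_sup, h.sup_eq_top]
    rfl

theorem finrank_lt [FiniteDimensional k V] {p : Subrepresentation ρ} (hp : p ≠ ⊤) :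
    Module.finrank k p.toSubmodule < Module.finrank k V :=
  Submodule.finrank_lt fun h => hp (toSubmodule_injective h)

theorem exists_ne_bot_ne_top_of_not_isIrreducible [Nontrivial V] (h : ¬ρ.IsIrreducible) :
    ∃ p : Subrepresentation ρ, p ≠ ⊥ ∧ p ≠ ⊤ := by
  by_contra! hp
  have : Nontrivial (Subrepresentation ρ) :=
    ⟨⊥, ⊤, fun h => bot_ne_top (congrArg toSubmodule h : (⊥ : Submodule k V) = ⊤)⟩
  exact h ⟨fun p => or_iff_not_imp_left.2 (hp p)⟩

end Subrepresentation

namespace Representation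

variable {k G V : Type*} [Field k] [Monoid G] [AddCommGroup V] [Module k V]
  [FiniteDimensional k V]

theorem character_eq_add_of_isCompl (ρ : Representation k G V) {p q : Subrepresentation ρ}
    (h : IsCompl p q) :
    ρ.character = p.toRepresentation.character + q.toRepresentation.character := by
  funext t
  let e := Submodule.prodEquivOfIsCompl _ _ (Subrepresentation.isCompl_toSubmodule h)
  have hconj : ρ t = e.conj ((p.toRepresentation t).prodMap (q.toRepresentation t)) := by
    refine LinearMap.ext fun v => ?_
    obtain ⟨⟨x, y⟩, rfl⟩ := e.surjective v
    simp [e, LinearEquiv.conj_apply_apply, Subrepresentation.toRepresentation]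
  rw [Pi.add_apply, character, hconj, LinearMap.trace_conj', LinearMap.trace_prodMap']
  rfl

variable {X : Type*} [MulAction G X] [Finite X]

theorem character_ofMulAction (g : G) :
    (ofMulAction k G X).character g = Nat.card (MulAction.fixedBy X g) := by
  classical
  have := Fintype.ofFinite X
  rw [character, LinearMap.trace_eq_matrix_trace k (MonoidAlgebra.basis X k), Matrix.trace,
    Nat.card_eq_fintype_card, Fintype.card_subtype, ← Finset.sum_boole]
  refine Finset.sum_congr rfl fun x _ => ?_
  simp only [Matrix.diag_apply, LinearMap.toMatrix_apply, MonoidAlgebra.basis_apply,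
    ofMulAction_single, MulAction.mem_fixedBy]
  exact Finsupp.single_apply

end Representation

namespace FDRep

variable (k G : Type u) [Field k] [Monoid G]

def simpleCharacters : Set (G → k) :=
  {f | ∃ V : FDRep k G, Simple V ∧ f = V.character}

end FDRep

open FDRep in
theorem Representation.character_mem_span_simpleCharacters {k G V : Type u} [Field k] [Group G]
    [Finite G] [NeZero (Nat.card G : k)] [AddCommGroup V] [Module k V] [FiniteDimensional k V]
    (ρ : Representation k G V) : ρ.character ∈ Submodule.span ℤ (simpleCharacters k G) := by
  induction hn : Module.finrank k V using Nat.strong_induction_on generalizing V with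
  | _ n ih =>
    rcases subsingleton_or_nontrivial V with hV | hV
    · have : ρ.character = 0 := funext fun t => by simp [character, Subsingleton.elim (ρ t) 0]
      rw [this]
      exact zero_mem _
    by_cases hirr : ρ.IsIrreducible
    · exact Submodule.subset_span ⟨FDRep.of ρ, FDRep.simple_of_isIrreducible ρ, rfl⟩
    obtain ⟨p, hp, hp'⟩ := Subrepresentation.exists_ne_bot_ne_top_of_not_isIrreducible hirr
    obtain ⟨q, hpq⟩ := exists_isCompl p
    have hq' : q ≠ ⊤ := fun hq => hp (eq_bot_of_isCompl_top (hq ▸ hpq))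
    rw [character_eq_add_of_isCompl ρ hpq]
    exact add_mem (ih _ (hn ▸ Subrepresentation.finrank_lt hp') _ rfl)
      (ih _ (hn ▸ Subrepresentation.finrank_lt hq') _ rfl)

namespace FDRep

open Pointwise MonoidalCategory

variable {k G : Type u} [Field k] [Group G] [Finite G] [NeZero (Nat.card G : k)]

theorem character_mem_span_simpleCharacters (V : FDRep k G) :
    V.character ∈ Submodule.span ℤ (simpleCharacters k G) :=
  Representation.character_mem_span_simpleCharacters V.ρ

theorem one_mem_span_simpleCharacters :
    (1 : G → k) ∈ Submodule.span ℤ (simpleCharacters k G) := by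
  have : (Representation.trivial k G k).character = 1 := by
    funext t
    simp [Representation.character]
  exact this ▸ Representation.character_mem_span_simpleCharacters _

theorem mul_mem_span_simpleCharacters {a b : G → k}
    (ha : a ∈ Submodule.span ℤ (simpleCharacters k G))
    (hb : b ∈ Submodule.span ℤ (simpleCharacters k G)) :
    a * b ∈ Submodule.span ℤ (simpleCharacters k G) := by
  refine Submodule.span_mul_span ℤ (simpleCharacters k G) (simpleCharacters k G) ▸
    Submodule.mul_mem_mul ha hb |> Submodule.span_le.2 ?_
  rintro _ ⟨_, ⟨V, -, rfl⟩, _, ⟨W, -, rfl⟩, rfl⟩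
  show V.character * W.character ∈ _
  rw [← char_tensor]
  exact character_mem_span_simpleCharacters _

variable (k G) in
def virtualCharacters : Subring (G → k) where
  __ := (Submodule.span ℤ (simpleCharacters k G)).toAddSubgroup
  mul_mem' := mul_mem_span_simpleCharacters
  one_mem' := one_mem_span_simpleCharacters

end FDRep

theorem QuotientGroup.mk_mem_fixedBy_iff {G : Type*} [Group G] (H : Subgroup G) (g a : G) :
    (a : G ⧸ H) ∈ MulAction.fixedBy (G ⧸ H) g ↔ a⁻¹ * g * a ∈ H := by
  rw [MulAction.mem_fixedBy, MulAction.Quotient.smul_mk, QuotientGroup.eq, ← inv_mem_iff]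
  simp [mul_assoc]

theorem Subring.exists_mem_separating_of_natCast_mem {X k : Type*} [CommRing k] [IsDomain k]
    [CharZero k] (R : Subring (X → k)) (N : X → ℕ) (hN : (fun x => (N x : k)) ∈ R)
    (s : Finset X) {x₀ : X} (hs : ∀ x ∈ s, N x ≠ N x₀) :
    ∃ f ∈ R, f x₀ ≠ 0 ∧ ∀ x ∈ s, f x = 0 := by
  refine ⟨∏ x ∈ s, ((fun y => (N y : k)) - (N x : X → k)),
    prod_mem fun x _ => sub_mem hN (natCast_mem R _), ?_, fun x hx => ?_⟩
  · rw [Finset.prod_apply, Finset.prod_ne_zero_iff]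
    intro x hx
    simpa [sub_eq_zero, eq_comm] using hs x hx
  · rw [Finset.prod_apply]
    exact Finset.prod_eq_zero hx (by simp)

/-- Let `G` be a finite group and `g, h ∈ G` with the cyclic subgroup generated by `h`
disjoint from the conjugacy class of `g`. Then there is a virtual character `x`
(a `ℤ`-linear combination of irreducible complex characters of `G`) with `x g ≠ 0` and
`x (h ^ m) = 0` for all integers `m`. -/
theorem exists_virtual_character_separating
    (G : Type) [Group G] [Fintype G] (g h : G)
    (hdisj : ∀ (m : ℤ) (k : G), h ^ m ≠ k * g * k⁻¹) :
    ∃ x : G → ℂ,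
      x ∈ Submodule.span ℤ {f : G → ℂ | ∃ V : FDRep ℂ G, Simple V ∧ f = V.character} ∧
      x g ≠ 0 ∧ ∀ m : ℤ, x (h ^ m) = 0 := by
  classical
  set H := Subgroup.zpowers h
  set N : G → ℕ := fun t => Nat.card (MulAction.fixedBy (G ⧸ H) t)
  have hθ : (fun t => (N t : ℂ)) ∈ FDRep.virtualCharacters ℂ G := by
    have hchar : (Representation.ofMulAction ℂ G (G ⧸ H)).character = fun t => (N t : ℂ) :=
      funext Representation.character_ofMulAction
    exact hchar ▸ Representation.character_mem_span_simpleCharacters _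
  have hNg : N g = 0 := by
    have : IsEmpty (MulAction.fixedBy (G ⧸ H) g) := by
      refine ⟨fun ⟨x, hx⟩ => ?_⟩
      induction x using QuotientGroup.induction_on with | H a => ?_
      obtain ⟨m, hm⟩ := Subgroup.mem_zpowers_iff.1 ((QuotientGroup.mk_mem_fixedBy_iff H g a).1 hx)
      exact hdisj m a⁻¹ (by rw [hm, inv_inv])
    exact Nat.card_of_isEmpty
  have hNH : ∀ t ∈ H, N t ≠ 0 := fun t ht => Nat.card_ne_zero.2
    ⟨⟨_, (QuotientGroup.mk_mem_fixedBy_iff H t 1).2 (by simpa using ht)⟩, inferInstance⟩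
  obtain ⟨x, hx, hxg, hxH⟩ := (FDRep.virtualCharacters ℂ G).exists_mem_separating_of_natCast_mem
    N hθ (H : Set G).toFinset (fun t ht => hNg ▸ hNH t (by simpa using ht))
  exact ⟨x, hx, hxg, fun m => hxH _ (by simp [H])⟩
end

section
/- Let a group G act on a set N, H ⊴ G a normal subgroup acting freely on N, g ∈ G, and n ∈ N with g • n = n. Then the intersection of the H-orbit of n with the fixed-point set of g equals the orbit of n under H_g := {h ∈ H : hg = gh}; in particular, if H is finite, |H·n ∩ Fix(g)| = |H_g|. -/
/-- Let a group `G` act on a set `N`, `H ⊴ G` a finite normal subgroup acting freely on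
`N`, `g ∈ G`, and `n ∈ N` with `g • n = n`. Then the intersection of the `H`-orbit of `n`
with the fixed-point set of `g` equals the orbit of `n` under `H_g = {h ∈ H : hg = gh}`;
in particular `|H·n ∩ Fix(g)| = |H_g|`. -/
theorem orbit_inter_fixedPoints
    (G : Type) [Group G] (N : Type) [MulAction G N] (H : Subgroup G) [H.Normal]
    [Finite ↥H]
    (hfree : ∀ (k : ↥H) (x : N), (k : G) • x = x → k = 1)
    (g : G) (n : N) (hn : g • n = n) :
    ({x : N | (∃ h : ↥H, (h : G) • n = x) ∧ g • x = x}
        = {x : N | ∃ h : ↥H, (h : G) * g = g * (h : G) ∧ (h : G) • n = x}) ∧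
      Nat.card {x : N | (∃ h : ↥H, (h : G) • n = x) ∧ g • x = x}
        = Nat.card {h : ↥H // (h : G) * g = g * (h : G)} := by
  -- injectivity of h ↦ h • n on H
  have hinj : ∀ h₁ h₂ : ↥H, (h₁ : G) • n = (h₂ : G) • n → h₁ = h₂ := by
    intro h₁ h₂ he
    have hmem : (h₂ : G)⁻¹ * (h₁ : G) ∈ H := H.mul_mem (H.inv_mem h₂.2) h₁.2
    have hfix : ((h₂ : G)⁻¹ * (h₁ : G)) • n = n := by
      rw [mul_smul, he, inv_smul_eq_iff]
    have h1 := congrArg Subtype.val (hfree ⟨_, hmem⟩ n hfix)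
    simp only [OneMemClass.coe_one] at h1
    ext
    exact (inv_mul_eq_one.mp h1).symm
  have key : ∀ h : ↥H, g • ((h : G) • n) = (h : G) • n →
      (h : G) * g = g * (h : G) := by
    intro h hx
    have hk : (h : G)⁻¹ * g * (h : G) * g⁻¹ ∈ H := by
      have := Subgroup.Normal.conj_mem ‹H.Normal› (h : G) h.2 g
      simpa [mul_assoc] using H.mul_mem (H.inv_mem h.2) this
    have hg : g⁻¹ • n = n := by rw [inv_smul_eq_iff]; exact hn.symm
    have hfix : ((h : G)⁻¹ * g * (h : G) * g⁻¹) • n = n := by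
      rw [mul_smul, hg, mul_smul, mul_smul, hx, inv_smul_eq_iff]
    have h1 := congrArg Subtype.val (hfree ⟨_, hk⟩ n hfix)
    simp only [OneMemClass.coe_one] at h1
    have h2 : (h : G)⁻¹ * g * (h : G) = g := mul_inv_eq_one.mp h1
    calc (h : G) * g = (h : G) * ((h : G)⁻¹ * g * (h : G)) := by rw [h2]
      _ = g * (h : G) := by group
  have hset : ({x : N | (∃ h : ↥H, (h : G) • n = x) ∧ g • x = x}
      = {x : N | ∃ h : ↥H, (h : G) * g = g * (h : G) ∧ (h : G) • n = x}) := by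
    ext x
    constructor
    · rintro ⟨⟨h, rfl⟩, hx⟩
      exact ⟨h, key h hx, rfl⟩
    · rintro ⟨h, hc, rfl⟩
      refine ⟨⟨h, rfl⟩, ?_⟩
      calc g • (h : G) • n = (g * (h : G)) • n := by rw [mul_smul]
        _ = ((h : G) * g) • n := by rw [hc]
        _ = (h : G) • n := by rw [mul_smul, hn]
  refine ⟨hset, ?_⟩
  rw [hset]
  refine (Nat.card_eq_of_bijective
    (fun h => ⟨(h.1 : G) • n, ⟨h.1, h.2, rfl⟩⟩) ⟨?_, ?_⟩).symm
  · rintro ⟨h₁, hc₁⟩ ⟨h₂, hc₂⟩ hxy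
    have : (h₁ : G) • n = (h₂ : G) • n := congrArg Subtype.val hxy
    exact Subtype.ext (hinj h₁ h₂ this)
  · rintro ⟨x, h, hc, rfl⟩
    exact ⟨⟨h, hc⟩, rfl⟩
end

section
/- Let G be a group acting on a set N, H ⊴ G a finite normal subgroup acting freely on N, g ∈ G, and n ∈ N such that g • n ∈ H·n (the H-orbit of n is preserved by g). Then |H| = Σ_{h ∈ H, H·n ∩ Fix(gh) ≠ ∅} |Z_H(gh)|, where Z_H(gh) = {k ∈ H : k(gh) = (gh)k} and Fix(gh) = {x ∈ N : (gh)•x = x}. -/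
open scoped Classical in
/-- Let `G` act on a set `N`, `H ⊴ G` a finite normal subgroup acting freely on `N`,
`g ∈ G` and `n ∈ N` with `g • n ∈ H·n`. Then
`|H| = Σ_{h ∈ H, H·n ∩ Fix(gh) ≠ ∅} |Z_H(gh)|`. -/
theorem card_eq_sum_card_centralizers
    (G : Type) [Group G] (N : Type) [MulAction G N] (H : Subgroup G) [H.Normal]
    [Fintype ↥H]
    (hfree : ∀ (k : ↥H) (x : N), (k : G) • x = x → k = 1)
    (g : G) (n : N) (hgn : ∃ h : ↥H, g • n = (h : G) • n) :
    Fintype.card ↥H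
      = ∑ h : ↥H,
          if ∃ k : ↥H, (g * (h : G)) • ((k : G) • n) = (k : G) • n then
            Nat.card {k : ↥H // (k : G) * (g * (h : G)) = (g * (h : G)) * (k : G)}
          else 0 := by
  classical
  obtain ⟨h₀, hh₀⟩ := hgn
  have hN : H.Normal := ‹H.Normal›
  -- If c fixes x and fixes m • x with m ∈ H, then c commutes with m.
  have comm_lemma : ∀ (c m : G), m ∈ H → ∀ x : N,
      c • x = x → c • (m • x) = m • x → c * m = m * c := by
    intro c m hm x hx hmx
    have hx' : c⁻¹ • x = x := by conv_lhs => rw [← hx, inv_smul_smul]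
    have hw : m⁻¹ * (c * m * c⁻¹) ∈ H :=
      H.mul_mem (H.inv_mem hm) (hN.conj_mem m hm c)
    have hfix : ((⟨_, hw⟩ : ↥H) : G) • x = x := by
      show (m⁻¹ * (c * m * c⁻¹)) • x = x
      rw [mul_smul, mul_smul, mul_smul, hx', hmx, inv_smul_smul]
    have h1 : m⁻¹ * (c * m * c⁻¹) = 1 :=
      congrArg Subtype.val (hfree ⟨_, hw⟩ x hfix)
    have h2 : m = c * m * c⁻¹ := inv_mul_eq_one.mp h1
    conv_rhs => rw [h2]
    group
  -- For each k there is a unique h with (g h) fixing k • n.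
  have key : ∀ k : ↥H, ∃! h : ↥H, (g * (h : G)) • ((k : G) • n) = (k : G) • n := by
    intro k
    have hmem : g⁻¹ * ((k : G) * (h₀ : G)⁻¹) * g * (k : G)⁻¹ ∈ H := by
      have : g⁻¹ * ((k : G) * (h₀ : G)⁻¹) * (g⁻¹)⁻¹ ∈ H :=
        hN.conj_mem _ (H.mul_mem k.2 (H.inv_mem h₀.2)) g⁻¹
      rw [inv_inv] at this
      exact H.mul_mem this (H.inv_mem k.2)
    refine ⟨⟨_, hmem⟩, ?_, ?_⟩
    · show (g * (g⁻¹ * ((k : G) * (h₀ : G)⁻¹) * g * (k : G)⁻¹)) • ((k : G) • n)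
        = (k : G) • n
      rw [smul_smul]
      have : g * (g⁻¹ * ((k : G) * (h₀ : G)⁻¹) * g * (k : G)⁻¹) * (k : G)
          = (k : G) * (h₀ : G)⁻¹ * g := by group
      rw [this, mul_smul, mul_smul, hh₀, inv_smul_smul]
    · intro h' hh'
      have hval : (g * (g⁻¹ * ((k : G) * (h₀ : G)⁻¹) * g * (k : G)⁻¹)) • ((k : G) • n)
          = (k : G) • n := by
        rw [smul_smul]
        have : g * (g⁻¹ * ((k : G) * (h₀ : G)⁻¹) * g * (k : G)⁻¹) * (k : G)
            = (k : G) * (h₀ : G)⁻¹ * g := by group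
        rw [this, mul_smul, mul_smul, hh₀, inv_smul_smul]
      -- h' • (k • n) = h₂ • (k • n) where h₂ is the explicit witness
      set h₂ : ↥H := ⟨_, hmem⟩ with hh₂
      have e1 : (h' : G) • ((k : G) • n) = (h₂ : G) • ((k : G) • n) := by
        have a1 : g • ((h' : G) • ((k : G) • n)) = (k : G) • n := by
          rw [← mul_smul]; exact hh'
        have a2 : g • ((h₂ : G) • ((k : G) • n)) = (k : G) • n := by
          rw [← mul_smul]; exact hval
        have := a1.trans a2.symm
        calc (h' : G) • ((k : G) • n)
            = g⁻¹ • g • ((h' : G) • ((k : G) • n)) := by rw [inv_smul_smul]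
          _ = g⁻¹ • g • ((h₂ : G) • ((k : G) • n)) := by rw [this]
          _ = (h₂ : G) • ((k : G) • n) := by rw [inv_smul_smul]
      have e2 : ((h₂⁻¹ * h') : ↥H) = 1 := by
        apply hfree (h₂⁻¹ * h') ((k : G) • n)
        push_cast
        rw [mul_smul, e1, inv_smul_smul]
      have := mul_eq_one_iff_inv_eq.mp e2
      rw [inv_inv] at this
      exact this.symm
  set f : ↥H → ↥H := fun k => (key k).choose with hf
  have hfP : ∀ k : ↥H, (g * ((f k : ↥H) : G)) • ((k : G) • n) = (k : G) • n :=
    fun k => (key k).choose_spec.1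
  have hfiff : ∀ (k h : ↥H),
      f k = h ↔ (g * (h : G)) • ((k : G) • n) = (k : G) • n := by
    intro k h
    constructor
    · rintro rfl; exact hfP k
    · intro hP; exact ((key k).choose_spec.2 h hP).symm
  rw [← Finset.card_univ,
    Finset.card_eq_sum_card_fiberwise (f := f) (t := Finset.univ)
      (fun k _ => Finset.mem_univ (f k))]
  refine Finset.sum_congr rfl fun h _ => ?_
  have hfilter : (Finset.univ.filter fun k => f k = h)
      = Finset.univ.filter fun k : ↥H => (g * (h : G)) • ((k : G) • n) = (k : G) • n := by
    ext k; simp [hfiff]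
  rw [hfilter]
  by_cases hex : ∃ k : ↥H, (g * (h : G)) • ((k : G) • n) = (k : G) • n
  · rw [if_pos hex]
    obtain ⟨k₀, hk₀⟩ := hex
    rw [← Fintype.card_subtype, ← Nat.card_eq_fintype_card]
    apply Nat.card_congr
    refine
      { toFun := fun k => ⟨k.1 * k₀⁻¹, ?_⟩
        invFun := fun m => ⟨m.1 * k₀, ?_⟩
        left_inv := fun k => by
          ext; push_cast; rw [inv_mul_cancel_right]
        right_inv := fun m => by
          ext; push_cast; rw [mul_inv_cancel_right] }
    · -- commutation
      have hP := k.2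
      have hmx : (g * (h : G)) • (((k.1 : G) * (k₀ : G)⁻¹) • ((k₀ : G) • n))
          = ((k.1 : G) * (k₀ : G)⁻¹) • ((k₀ : G) • n) := by
        have e : ((k.1 : G) * (k₀ : G)⁻¹) • ((k₀ : G) • n) = (k.1 : G) • n := by
          rw [smul_smul, inv_mul_cancel_right]
        rw [e]; exact hP
      have := comm_lemma (g * (h : G)) ((k.1 : G) * (k₀ : G)⁻¹)
        (H.mul_mem k.1.2 (H.inv_mem k₀.2)) ((k₀ : G) • n) hk₀ hmx
      push_cast
      exact this.symm
    · -- fixed point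
      have hcomm := m.2
      push_cast
      rw [mul_smul ((m.1 : G)) ((k₀ : G)) n, smul_smul (g * (h : G)), ← hcomm,
        mul_smul, hk₀]
  · rw [if_neg hex, Finset.filter_false_of_mem, Finset.card_empty]
    intro k _ hk
    exact hex ⟨k, hk⟩
end
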